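/- arXiv:2412.12065 — 2 statements merged into one kernel-verified Lean document; each statement's English description precedes it below -/
import Mathlib

section
/- Let a, b : M → [0,1] be functions on a set M with a(m) ≥ b(m) for all m, let ε = 2^{-n}, and suppose for each k < 2^n there is a function ρ_k : M → [0,1] such that: ρ_k(m) = 0 whenever a(m) ≤ k·ε, and ρ_k(m) = 1 whenever b(m) ≥ (k+1)·ε. Define θ(m) = max_{k < 2^n} (k+1)·ε·∏_{j ≤ k} ρ_j(m). Then for all m ∈ M: a(m) ≥ θ(m) − ε and θ(m) ≥ max(b(m) − ε, 0). -/
theorem stmt3 {M : Type*} (n : ℕ) (hn : 1 ≤ n) (a b : M → ℝ)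
    (ha : ∀ m, a m ∈ Set.Icc (0:ℝ) 1) (hb : ∀ m, b m ∈ Set.Icc (0:ℝ) 1)
    (hab : ∀ m, b m ≤ a m)
    (ρ : Fin (2 ^ n) → M → ℝ) (hρ : ∀ k m, ρ k m ∈ Set.Icc (0:ℝ) 1)
    (hρ0 : ∀ (k : Fin (2 ^ n)) m, a m ≤ (k : ℕ) * (2 : ℝ) ^ (-(n : ℤ)) → ρ k m = 0)
    (hρ1 : ∀ (k : Fin (2 ^ n)) m, ((k : ℕ) + 1) * (2 : ℝ) ^ (-(n : ℤ)) ≤ b m → ρ k m = 1)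
    (θ : M → ℝ)
    (hθ : ∀ m, θ m =
      ⨆ k : Fin (2 ^ n), ((k : ℕ) + 1) * (2 : ℝ) ^ (-(n : ℤ)) * ∏ j ∈ Finset.Iic k, ρ j m) :
    ∀ m, θ m - (2 : ℝ) ^ (-(n : ℤ)) ≤ a m ∧
      max (b m - (2 : ℝ) ^ (-(n : ℤ))) 0 ≤ θ m := by
  intro m
  set ε : ℝ := (2 : ℝ) ^ (-(n : ℤ)) with hε
  have hεpos : 0 < ε := by positivity
  have hεone : (2 ^ n : ℝ) * ε = 1 := by
    rw [hε, ← zpow_natCast (2 : ℝ) n, ← zpow_add₀ (two_ne_zero)]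
    simp
  have hpow : (0:ℕ) < 2 ^ n := Nat.pow_pos (by norm_num)
  haveI : Nonempty (Fin (2 ^ n)) := ⟨⟨0, hpow⟩⟩
  have hprod0 : ∀ k : Fin (2 ^ n), (0:ℝ) ≤ ∏ j ∈ Finset.Iic k, ρ j m :=
    fun k => Finset.prod_nonneg fun j _ => (hρ j m).1
  have hprod1 : ∀ k : Fin (2 ^ n), (∏ j ∈ Finset.Iic k, ρ j m) ≤ 1 :=
    fun k => Finset.prod_le_one (fun j _ => (hρ j m).1) (fun j _ => (hρ j m).2)
  have hbdd : BddAbove (Set.range fun k : Fin (2 ^ n) =>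
      ((k : ℕ) + 1) * ε * ∏ j ∈ Finset.Iic k, ρ j m) := Finite.bddAbove_range _
  constructor
  · rw [hθ m, sub_le_iff_le_add]
    apply ciSup_le
    intro k
    by_cases h : a m ≤ (k : ℕ) * ε
    · have h0 : ρ k m = 0 := hρ0 k m h
      have hp : (∏ j ∈ Finset.Iic k, ρ j m) = 0 :=
        Finset.prod_eq_zero (Finset.mem_Iic.mpr le_rfl) h0
      rw [hp, mul_zero]
      linarith [(ha m).1]
    · push_neg at h
      have h1 : ((k : ℕ) + 1) * ε * ∏ j ∈ Finset.Iic k, ρ j m ≤ ((k : ℕ) + 1) * ε := by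
        nth_rewrite 2 [← mul_one (((k : ℕ) + 1) * ε)]
        apply mul_le_mul_of_nonneg_left (hprod1 k)
        positivity
      nlinarith
  · rw [hθ m]
    have hθ0 : (0:ℝ) ≤ ⨆ k : Fin (2 ^ n), ((k : ℕ) + 1) * ε * ∏ j ∈ Finset.Iic k, ρ j m := by
      refine le_trans ?_ (le_ciSup hbdd ⟨0, hpow⟩)
      have := hprod0 ⟨0, hpow⟩
      positivity
    rcases le_or_gt (b m) ε with hbe | hbe
    · exact max_le (by linarith) hθ0
    · -- choose K = floor (b m / ε)
      set K : ℕ := Nat.floor (b m / ε) with hK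
      have hdiv1 : (1:ℝ) ≤ b m / ε := (one_le_div hεpos).mpr hbe.le
      have hK1 : 1 ≤ K := Nat.le_floor (by exact_mod_cast hdiv1)
      have hKle : (K : ℝ) * ε ≤ b m := by
        have := Nat.floor_le (le_trans zero_le_one hdiv1)
        rw [← hK] at this
        calc (K : ℝ) * ε ≤ (b m / ε) * ε := by nlinarith
        _ = b m := by field_simp
      have hKlt : b m < ((K : ℝ) + 1) * ε := by
        have := Nat.lt_floor_add_one (b m / ε)
        rw [← hK] at this
        calc b m = (b m / ε) * ε := by field_simp
        _ < ((K : ℝ) + 1) * ε := by nlinarith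
      have hKub : K ≤ 2 ^ n := by
        by_contra hc
        push_neg at hc
        have : (2 ^ n : ℝ) + 1 ≤ (K : ℝ) := by exact_mod_cast hc
        have hb1 := (hb m).2
        nlinarith
      have hklt : K - 1 < 2 ^ n := by omega
      set k : Fin (2 ^ n) := ⟨K - 1, hklt⟩ with hk
      have hkcast : ((k : ℕ) : ℝ) + 1 = (K : ℝ) := by
        have : (k : ℕ) + 1 = K := by simp [hk]; omega
        exact_mod_cast this
      have hprodone : (∏ j ∈ Finset.Iic k, ρ j m) = 1 := by
        apply Finset.prod_eq_one
        intro j hj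
        apply hρ1 j m
        have hjk : (j : ℕ) ≤ K - 1 := by
          have := Finset.mem_Iic.mp hj
          simpa [hk, Fin.le_def] using this
        have hjK : ((j : ℕ) : ℝ) + 1 ≤ (K : ℝ) := by
          have : (j : ℕ) + 1 ≤ K := by omega
          exact_mod_cast this
        calc ((j : ℕ) + 1) * ε ≤ (K : ℝ) * ε := by nlinarith
        _ ≤ b m := hKle
      have hterm : ((k : ℕ) + 1) * ε * ∏ j ∈ Finset.Iic k, ρ j m = (K : ℝ) * ε := by
        rw [hprodone, mul_one, hkcast]
      have := le_ciSup hbdd k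
      rw [hterm] at this
      refine max_le ?_ hθ0
      linarith
end

section
/- Suppose a, b, θ : M → [0,1] satisfy a ≥ b pointwise and θ is a strong ε-interpolant (a ≥ θ and θ ≥ b ∸ ε pointwise), and suppose there exists m₀ ∈ M with ε < b(m₀). Then θ(m₀) > 0, and there exists a strictly increasing continuous C : [0,1] → [0,1] with C(0) = 0 such that C ∘ θ is a weak ε-interpolant of a and b but not a strong ε-interpolant (namely, C can be chosen with 0 < C(θ(m₀)) < b(m₀) − ε, violating C(θ(m₀)) ≥ b(m₀) − ε). -/
theorem stmt13 {M : Type*} (ε : ℝ) (hε : ε ∈ Set.Ioc (0:ℝ) 1)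
    (a b θ : M → ℝ)
    (ha : ∀ m, a m ∈ Set.Icc (0:ℝ) 1) (hb : ∀ m, b m ∈ Set.Icc (0:ℝ) 1)
    (hθr : ∀ m, θ m ∈ Set.Icc (0:ℝ) 1)
    (hab : ∀ m, b m ≤ a m)
    (hstrong1 : ∀ m, θ m ≤ a m) (hstrong2 : ∀ m, max (b m - ε) 0 ≤ θ m)
    (m₀ : M) (hm₀ : ε < b m₀) :
    0 < θ m₀ ∧
    ∃ C : ℝ → ℝ, StrictMonoOn C (Set.Icc (0:ℝ) 1) ∧
      ContinuousOn C (Set.Icc (0:ℝ) 1) ∧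
      Set.MapsTo C (Set.Icc (0:ℝ) 1) (Set.Icc (0:ℝ) 1) ∧
      C 0 = 0 ∧
      0 < C (θ m₀) ∧ C (θ m₀) < b m₀ - ε ∧
      ((∀ m, a m = 0 → C (θ m) = 0) ∧ (∀ m, C (θ m) = 0 → b m ≤ ε)) ∧
      ¬ (∀ m, C (θ m) ≤ a m ∧ max (b m - ε) 0 ≤ C (θ m)) := by
  have hbε : 0 < b m₀ - ε := by linarith
  have hθ0 : 0 < θ m₀ := lt_of_lt_of_le hbε (le_trans (le_max_left _ _) (hstrong2 m₀))
  set c : ℝ := min 1 ((b m₀ - ε) / (2 * θ m₀)) with hc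
  have hcpos : 0 < c := lt_min one_pos (by positivity)
  have hc1 : c ≤ 1 := min_le_left _ _
  refine ⟨hθ0, fun x => c * x, ?_, ?_, ?_, by ring, ?_, ?_, ⟨?_, ?_⟩, ?_⟩
  · intro x _ y _ hxy
    exact mul_lt_mul_of_pos_left hxy hcpos
  · exact (continuous_const.mul continuous_id).continuousOn
  · intro x hx
    exact ⟨mul_nonneg hcpos.le hx.1, le_trans (mul_le_mul hc1 hx.2 hx.1 one_pos.le) (by ring_nf; exact le_refl 1)⟩
  · positivity
  · have : c ≤ (b m₀ - ε) / (2 * θ m₀) := min_le_right _ _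
    have h2 : c * θ m₀ ≤ (b m₀ - ε) / 2 := by
      rw [div_mul_eq_div_div] at this
      calc c * θ m₀ ≤ ((b m₀ - ε) / 2 / θ m₀) * θ m₀ :=
            mul_le_mul_of_nonneg_right this hθ0.le
        _ = (b m₀ - ε) / 2 := by field_simp
    simp only [] at *
    linarith
  · intro m ham
    have h1 : θ m ≤ 0 := (hstrong1 m).trans_eq ham
    have hθm : θ m = 0 := le_antisymm h1 (hθr m).1
    simp [hθm]
  · intro m hm
    have hθm : θ m = 0 := by
      rcases (mul_eq_zero.mp hm) with h | h
      · exact absurd h hcpos.ne'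
      · exact h
    have := hstrong2 m
    rw [hθm] at this
    have := le_trans (le_max_left (b m - ε) 0) this
    linarith
  · intro h
    have := (h m₀).2
    have hmax : max (b m₀ - ε) 0 = b m₀ - ε := max_eq_left hbε.le
    rw [hmax] at this
    have hle : c ≤ (b m₀ - ε) / (2 * θ m₀) := min_le_right _ _
    have h2 : c * θ m₀ ≤ (b m₀ - ε) / 2 := by
      rw [div_mul_eq_div_div] at hle
      calc c * θ m₀ ≤ ((b m₀ - ε) / 2 / θ m₀) * θ m₀ :=
            mul_le_mul_of_nonneg_right hle hθ0.le
        _ = (b m₀ - ε) / 2 := by field_simp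
    simp only [] at this
    linarith
end
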